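/- Let π be a finitely generated group, φ: π → π an endomorphism, and π' a φ-invariant finite normal subgroup of π. Then GR(φ) = max{GR(φ'), GR(φ̂)}, where φ' = φ|_{π'} and φ̂ is the induced endomorphism of π/π'. Moreover, GR(φ) = GR(φ̂) if and only if φ' is eventually trivial or φ̂ is not eventually trivial. -/

import Mathlib

open Filter Topology

/-- Word length of `g` with respect to the (symmetrized) generating set `S`. -/
noncomputable def wordLength {G : Type*} [Group G] (S : Set G) (g : G) : ℕ :=
  sInf {n : ℕ | ∃ w : List G, w.length = n ∧ (∀ x ∈ w, x ∈ S ∨ x⁻¹ ∈ S) ∧ w.prod = g}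

/-- `L_k(f, S) = max_{s ∈ S} L(f^k(s), S)`. -/
noncomputable def Lk {G : Type*} [Group G] (S : Finset G) (f : G → G) (k : ℕ) : ℕ :=
  S.sup fun s => wordLength (S : Set G) (f^[k] s)

/-- The growth rate `GR(f) = inf_{k ≥ 1} L_k(f,S)^{1/k}` (which equals
`lim_{k→∞} L_k(f,S)^{1/k}`). -/
noncomputable def GR {G : Type*} [Group G] (S : Finset G) (f : G → G) : ℝ :=
  ⨅ k : ℕ+, (Lk S f k : ℝ) ^ (((k : ℕ) : ℝ))⁻¹

/-- `f` is eventually trivial if some iterate is the trivial endomorphism. -/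
def EventuallyTrivial {G : Type*} [Group G] (f : G → G) : Prop :=
  ∃ N : ℕ, 0 < N ∧ ∀ g, f^[N] g = 1

/-! Word length is subadditive, so `k ↦ L_k(φ)` is submultiplicative; hence `GR` does not change
when `L_k` is multiplied by a constant factor, and in particular it does not depend on the
generating set. On the finite group `π'` the lengths `L_k(φ')` are bounded, so `GR(φ')` is `0`
or `1` according as `φ'` is eventually trivial or not. After adding `π'` to the generators of
`π`, mapping words to `π/π'` and lifting them back gives `L_k(φ̂) ≤ L_k(φ) ≤ L_k(φ̂) + 1`. So
`GR(φ) = GR(φ̂) ≥ 1` unless `φ̂` is eventually trivial, and then `GR(φ) ∈ {0, 1}` equals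
`GR(φ')`. -/

section WordLength

variable {G H : Type*} [Group G] [Group H] {S : Set G}

lemma wordLength_le_length {g : G} {w : List G} (hw : ∀ x ∈ w, x ∈ S ∨ x⁻¹ ∈ S)
    (hg : w.prod = g) : wordLength S g ≤ w.length :=
  Nat.sInf_le ⟨w, rfl, hw, hg⟩

lemma exists_word_length_eq (hS : Subgroup.closure S = ⊤) (g : G) :
    ∃ w : List G, w.length = wordLength S g ∧ (∀ x ∈ w, x ∈ S ∨ x⁻¹ ∈ S) ∧ w.prod = g := by
  have hg : g ∈ Submonoid.closure (S ∪ S⁻¹) := by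
    rw [← Subgroup.closure_toSubmonoid, hS]
    trivial
  obtain ⟨w, hw, rfl⟩ := Submonoid.exists_list_of_mem_closure hg
  exact Nat.sInf_mem (s := {n | ∃ v : List G, v.length = n ∧ (∀ x ∈ v, x ∈ S ∨ x⁻¹ ∈ S) ∧
    v.prod = w.prod}) ⟨w.length, w, rfl, fun x hx => (hw x hx).imp id Set.mem_inv.mp, rfl⟩

lemma wordLength_le_one {s : G} (hs : s ∈ S) : wordLength S s ≤ 1 :=
  wordLength_le_length (w := [s]) (by simp [hs]) List.prod_singleton

lemma wordLength_one : wordLength S (1 : G) = 0 :=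
  Nat.le_zero.mp (wordLength_le_length (w := []) (by simp) rfl)

lemma wordLength_eq_zero_iff (hS : Subgroup.closure S = ⊤) {g : G} :
    wordLength S g = 0 ↔ g = 1 := by
  refine ⟨fun h => ?_, fun h => h ▸ wordLength_one⟩
  obtain ⟨w, hw, -, rfl⟩ := exists_word_length_eq hS g
  rw [List.length_eq_zero_iff.mp (hw.trans h), List.prod_nil]

lemma wordLength_inv (g : G) : wordLength S g⁻¹ = wordLength S g := by
  have reverse_inv : ∀ (h : G) (n : ℕ),
      (∃ w : List G, w.length = n ∧ (∀ x ∈ w, x ∈ S ∨ x⁻¹ ∈ S) ∧ w.prod = h) →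
      ∃ w : List G, w.length = n ∧ (∀ x ∈ w, x ∈ S ∨ x⁻¹ ∈ S) ∧ w.prod = h⁻¹ := by
    rintro h n ⟨w, rfl, hw, rfl⟩
    refine ⟨(w.map (·⁻¹)).reverse, by simp, ?_, (List.prod_inv_reverse w).symm⟩
    intro x hx
    obtain ⟨y, hy, rfl⟩ := List.mem_map.mp (List.mem_reverse.mp hx)
    simpa [or_comm] using hw y hy
  unfold wordLength
  congr 1
  ext n
  exact ⟨fun h => by simpa using reverse_inv g⁻¹ n h, reverse_inv g n⟩

lemma wordLength_mul_le (hS : Subgroup.closure S = ⊤) (g h : G) :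
    wordLength S (g * h) ≤ wordLength S g + wordLength S h := by
  obtain ⟨v, hv, hvS, rfl⟩ := exists_word_length_eq hS g
  obtain ⟨w, hw, hwS, rfl⟩ := exists_word_length_eq hS h
  rw [← hv, ← hw, ← List.length_append, ← List.prod_append]
  exact wordLength_le_length (fun x hx => (List.mem_append.mp hx).elim (hvS x) (hwS x)) rfl

lemma wordLength_list_prod_le {T : Set H} (hT : Subgroup.closure T = ⊤) {M : ℕ}
    (l : List H) (hl : ∀ x ∈ l, wordLength T x ≤ M) : wordLength T l.prod ≤ l.length * M := by
  induction l with
  | nil => simp [wordLength_one]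
  | cons x l ih =>
    rw [List.prod_cons, List.length_cons, Nat.succ_mul, add_comm]
    exact (wordLength_mul_le hT x l.prod).trans
      (add_le_add (hl x (by simp)) (ih fun y hy => hl y (by simp [hy])))

lemma wordLength_map_le (hS : Subgroup.closure S = ⊤) {T : Set H}
    (hT : Subgroup.closure T = ⊤) (f : G →* H) {M : ℕ}
    (hM : ∀ s ∈ S, wordLength T (f s) ≤ M) (g : G) :
    wordLength T (f g) ≤ wordLength S g * M := by
  obtain ⟨w, hw, hwS, rfl⟩ := exists_word_length_eq hS g
  rw [← hw, map_list_prod, ← List.length_map f]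
  refine wordLength_list_prod_le hT _ fun y hy => ?_
  obtain ⟨x, hx, rfl⟩ := List.mem_map.mp hy
  rcases hwS x hx with hxS | hxS
  · exact hM x hxS
  · simpa [wordLength_inv] using hM _ hxS

lemma wordLength_image_map_le (hS : Subgroup.closure S = ⊤) (f : G →* H) (g : G) :
    wordLength (f '' S) (f g) ≤ wordLength S g := by
  obtain ⟨w, hw, hwS, rfl⟩ := exists_word_length_eq hS g
  rw [← hw, map_list_prod, ← List.length_map f]
  refine wordLength_le_length (fun y hy => ?_) rfl
  obtain ⟨x, hx, rfl⟩ := List.mem_map.mp hy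
  exact (hwS x hx).imp (Set.mem_image_of_mem f) fun h => ⟨x⁻¹, h, map_inv f x⟩

lemma exists_lift_word (f : G →* H) (w : List H)
    (hw : ∀ y ∈ w, y ∈ f '' S ∨ y⁻¹ ∈ f '' S) :
    ∃ v : List G, (∀ x ∈ v, x ∈ S ∨ x⁻¹ ∈ S) ∧ v.map f = w := by
  induction w with
  | nil => exact ⟨[], by simp, rfl⟩
  | cons y w ih =>
    obtain ⟨v, hvS, rfl⟩ := ih fun z hz => hw z (by simp [hz])
    obtain ⟨x, hx, rfl⟩ | ⟨x, hx, hxy⟩ := hw y (by simp)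
    · exact ⟨x :: v, by simpa [hx] using hvS, rfl⟩
    · refine ⟨x⁻¹ :: v, by simpa [hx] using hvS, ?_⟩
      rw [List.map_cons, map_inv, hxy, inv_inv]

end WordLength

lemma le_of_forall_pow_le_mul_pow {x y C : ℝ} (hy : 0 ≤ y)
    (h : ∀ n, 0 < n → x ^ n ≤ C * y ^ n) : x ≤ y := by
  by_contra! hyx
  rcases hy.eq_or_lt with rfl | hy
  · have := h 1 one_pos
    simp only [pow_one, mul_zero] at this
    linarith
  have hxy : 1 < x / y := (one_lt_div hy).mpr hyx
  obtain ⟨n, hn⟩ := pow_unbounded_of_one_lt C hxy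
  have hlt : C * y ^ (n + 1) < x ^ (n + 1) :=
    calc C * y ^ (n + 1) < (x / y) ^ (n + 1) * y ^ (n + 1) :=
          mul_lt_mul_of_pos_right (hn.trans_le (pow_le_pow_right₀ hxy.le n.le_succ)) (by positivity)
      _ = x ^ (n + 1) := by rw [div_pow, div_mul_cancel₀ _ (by positivity)]
  exact (h (n + 1) n.succ_pos).not_gt hlt

section GrowthRate

variable {G : Type*} [Group G] {S : Finset G}

lemma wordLength_iterate_le_Lk (f : G → G) {s : G} (hs : s ∈ S) (k : ℕ) :
    wordLength (S : Set G) (f^[k] s) ≤ Lk S f k :=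
  Finset.le_sup (f := fun s => wordLength (S : Set G) (f^[k] s)) hs

lemma Lk_zero_le_one (f : G → G) : Lk S f 0 ≤ 1 :=
  Finset.sup_le fun _ hs => wordLength_le_one (Finset.mem_coe.mpr hs)

lemma Lk_eq_zero_of_iterate_eq_one {f : G → G} {k : ℕ} (hk : ∀ g, f^[k] g = 1) :
    Lk S f k = 0 :=
  Nat.le_zero.mp (Finset.sup_le fun s _ => by rw [hk s, wordLength_one])

lemma wordLength_iterate_le (hS : Subgroup.closure (S : Set G) = ⊤) (f : G →* G) (k : ℕ)
    (g : G) : wordLength (S : Set G) ((⇑f)^[k] g) ≤ wordLength (S : Set G) g * Lk S f k :=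
  wordLength_map_le hS hS ((show Monoid.End G from f) ^ k)
    (fun _ hs => wordLength_iterate_le_Lk f hs k) g

lemma Lk_add_le (hS : Subgroup.closure (S : Set G) = ⊤) (f : G →* G) (m k : ℕ) :
    Lk S f (m + k) ≤ Lk S f m * Lk S f k :=
  Finset.sup_le fun s hs => by
    rw [Function.iterate_add_apply, mul_comm]
    exact (wordLength_iterate_le hS f m _).trans
      (Nat.mul_le_mul_right _ (wordLength_iterate_le_Lk f hs k))

lemma Lk_mul_le_pow (hS : Subgroup.closure (S : Set G) = ⊤) (f : G →* G) (m j : ℕ) :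
    Lk S f (m * j) ≤ Lk S f m ^ j := by
  induction j with
  | zero => simpa using Lk_zero_le_one f
  | succ j ih =>
    rw [Nat.mul_succ, pow_succ]
    exact (Lk_add_le hS f _ _).trans (Nat.mul_le_mul_right _ ih)

lemma Lk_le_mul_Lk {T : Finset G} (hS : Subgroup.closure (S : Set G) = ⊤)
    (hT : Subgroup.closure (T : Set G) = ⊤) (f : G →* G) (k : ℕ) :
    Lk T f k ≤ T.sup (wordLength (S : Set G)) * S.sup (wordLength (T : Set G)) * Lk S f k :=
  Finset.sup_le fun t ht =>
    calc wordLength (T : Set G) ((⇑f)^[k] t)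
        ≤ wordLength (S : Set G) ((⇑f)^[k] t) * S.sup (wordLength (T : Set G)) :=
          wordLength_map_le hS hT (MonoidHom.id G) (fun _ hs => Finset.le_sup hs) _
      _ ≤ wordLength (S : Set G) t * Lk S f k * S.sup (wordLength (T : Set G)) := by
          gcongr; exact wordLength_iterate_le hS f k t
      _ ≤ T.sup (wordLength (S : Set G)) * Lk S f k * S.sup (wordLength (T : Set G)) := by
          gcongr; exact Finset.le_sup ht
      _ = _ := by ring

lemma one_le_Lk_of_not_eventuallyTrivial (hS : Subgroup.closure (S : Set G) = ⊤) (f : G →* G)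
    (hf : ¬ EventuallyTrivial f) {k : ℕ} (hk : 0 < k) : 1 ≤ Lk S f k := by
  by_contra! hLk
  have hgen : Set.EqOn ((show Monoid.End G from f) ^ k : G →* G) (1 : G →* G) S := fun s hs =>
    (wordLength_eq_zero_iff hS).mp
      (Nat.lt_one_iff.mp ((wordLength_iterate_le_Lk f hs k).trans_lt hLk))
  exact hf ⟨k, hk, fun g => DFunLike.congr_fun (MonoidHom.eq_of_eqOn_dense hS hgen) g⟩

lemma GR_nonneg (S : Finset G) (f : G → G) : 0 ≤ GR S f :=
  Real.iInf_nonneg fun _ => by positivity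

lemma GR_pow_le_Lk (S : Finset G) (f : G → G) {k : ℕ} (hk : 0 < k) :
    GR S f ^ k ≤ Lk S f k :=
  calc GR S f ^ k ≤ ((Lk S f k : ℝ) ^ (k : ℝ)⁻¹) ^ k := by
        have hbdd : BddBelow (Set.range fun k : ℕ+ => (Lk S f k : ℝ) ^ ((k : ℕ) : ℝ)⁻¹) :=
          ⟨0, Set.forall_mem_range.mpr fun _ => by positivity⟩
        exact pow_le_pow_left₀ (GR_nonneg S f) (ciInf_le hbdd (⟨k, hk⟩ : ℕ+)) k
    _ = Lk S f k := Real.rpow_inv_natCast_pow (by positivity) hk.ne'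

lemma le_GR {f : G → G} {x : ℝ} (hx : 0 ≤ x) (h : ∀ k, 0 < k → x ^ k ≤ Lk S f k) :
    x ≤ GR S f :=
  le_ciInf fun k =>
    calc x = (x ^ (k : ℕ)) ^ ((k : ℕ) : ℝ)⁻¹ := (Real.pow_rpow_inv_natCast hx k.ne_zero).symm
      _ ≤ _ := Real.rpow_le_rpow (by positivity) (h k k.pos) (by positivity)

/-- Submultiplicativity of `Lk S f` is what lets `GR` absorb the constant `C`. -/
lemma GR_le_GR_of_Lk_le_mul {H : Type*} [Group H] {T : Finset H} {g : H → H}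
    (hS : Subgroup.closure (S : Set G) = ⊤) (f : G →* G) (C : ℕ)
    (h : ∀ k, 0 < k → Lk T g k ≤ C * Lk S f k) : GR T g ≤ GR S f := by
  refine le_GR (GR_nonneg T g) fun m hm => le_of_forall_pow_le_mul_pow
    (by positivity) (C := C) fun j hj => ?_
  have hmj : 0 < m * j := Nat.mul_pos hm hj
  calc (GR T g ^ m) ^ j = GR T g ^ (m * j) := (pow_mul _ _ _).symm
    _ ≤ Lk T g (m * j) := GR_pow_le_Lk T g hmj
    _ ≤ C * Lk S f (m * j) := by exact_mod_cast h _ hmj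
    _ ≤ C * (Lk S f m : ℝ) ^ j := by gcongr; exact_mod_cast Lk_mul_le_pow hS f m j

lemma GR_eq_of_closure_eq_top {T : Finset G} (hS : Subgroup.closure (S : Set G) = ⊤)
    (hT : Subgroup.closure (T : Set G) = ⊤) (f : G →* G) : GR S f = GR T f :=
  le_antisymm (GR_le_GR_of_Lk_le_mul hT f _ fun k _ => Lk_le_mul_Lk hT hS f k)
    (GR_le_GR_of_Lk_le_mul hS f _ fun k _ => Lk_le_mul_Lk hS hT f k)

lemma one_le_GR_of_not_eventuallyTrivial (hS : Subgroup.closure (S : Set G) = ⊤) (f : G →* G)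
    (hf : ¬ EventuallyTrivial f) : 1 ≤ GR S f :=
  le_GR zero_le_one fun k hk => by simpa using one_le_Lk_of_not_eventuallyTrivial hS f hf hk

lemma GR_eq_zero_of_eventuallyTrivial (S : Finset G) {f : G → G} (hf : EventuallyTrivial f) :
    GR S f = 0 := by
  obtain ⟨k, hk, hfk⟩ := hf
  have hpow : GR S f ^ k ≤ 0 := by
    simpa [Lk_eq_zero_of_iterate_eq_one hfk] using GR_pow_le_Lk S f hk
  exact pow_eq_zero_iff hk.ne' |>.mp (le_antisymm hpow (pow_nonneg (GR_nonneg S f) k))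

lemma GR_le_one_of_Lk_le_one {f : G → G} {k : ℕ} (hk : 0 < k) (h : Lk S f k ≤ 1) :
    GR S f ≤ 1 :=
  (pow_le_one_iff_of_nonneg (GR_nonneg S f) hk.ne').mp
    ((GR_pow_le_Lk S f hk).trans (by exact_mod_cast h))

lemma GR_le_one_of_finite [Finite G] (S : Finset G) (f : G → G) : GR S f ≤ 1 := by
  obtain ⟨D, hD⟩ := (Set.finite_range (wordLength (S : Set G))).bddAbove
  refine le_of_forall_pow_le_mul_pow zero_le_one (C := D) fun k hk => ?_
  have hLk : Lk S f k ≤ D := Finset.sup_le fun s _ => hD (Set.mem_range_self _)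
  simpa using (GR_pow_le_Lk S f hk).trans (by exact_mod_cast hLk)

end GrowthRate

lemma eventuallyTrivial_restrict {π : Type*} [Group π] {N : Subgroup π} (φ : π →* π)
    {φ' : N →* N} (hφ' : ∀ x, (φ' x : π) = φ x)
    (h : EventuallyTrivial φ) : EventuallyTrivial φ' := by
  obtain ⟨k, hk, hφk⟩ := h
  exact ⟨k, hk, fun x => Subtype.ext <|
    (Function.Semiconj.iterate_right (f := ((↑) : N → π)) hφ' k x).trans (hφk x)⟩

section Extension

variable {π : Type*} [Group π] {N : Subgroup π} [N.Normal]

lemma QuotientGroup.closure_image_mk_eq_top {S : Set π} (hS : Subgroup.closure S = ⊤) :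
    Subgroup.closure (((↑) : π → π ⧸ N) '' S) = ⊤ := by
  rw [← QuotientGroup.coe_mk', ← MonoidHom.map_closure, hS,
    Subgroup.map_top_of_surjective _ (QuotientGroup.mk'_surjective N)]

lemma wordLength_le_wordLength_mk_add_one {S : Set π} (hS : Subgroup.closure S = ⊤)
    (hNS : (N : Set π) ⊆ S) (g : π) :
    wordLength S g ≤ wordLength (((↑) : π → π ⧸ N) '' S) (g : π ⧸ N) + 1 := by
  obtain ⟨w, hw, hwS, hwg⟩ :=
    exists_word_length_eq (QuotientGroup.closure_image_mk_eq_top hS) (g : π ⧸ N)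
  rw [← QuotientGroup.coe_mk'] at hwS
  obtain ⟨v, hvS, rfl⟩ := exists_lift_word _ w hwS
  have hn : v.prod⁻¹ * g ∈ N := by
    rw [← QuotientGroup.eq, ← hwg, ← map_list_prod]
    rfl
  calc wordLength S g = wordLength S (v ++ [v.prod⁻¹ * g]).prod := by simp
    _ ≤ (v ++ [v.prod⁻¹ * g]).length :=
        wordLength_le_length (fun x hx => (List.mem_append.mp hx).elim (hvS x)
          fun h => Or.inl (hNS (List.mem_singleton.mp h ▸ hn))) rfl
    _ = _ := by rw [List.length_append, ← hw, List.length_map]; rfl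

lemma exists_finset_closure_eq_top_superset {S : Finset π}
    (hS : Subgroup.closure (S : Set π) = ⊤) {s : Set π} (hs : s.Finite) :
    ∃ V : Finset π, Subgroup.closure (V : Set π) = ⊤ ∧ s ⊆ V := by
  classical
  refine ⟨S ∪ hs.toFinset, ?_, by simp⟩
  exact top_unique (hS ▸ Subgroup.closure_mono (by simp))

variable (φ : π →* π) (hφ : N ≤ N.comap φ)

lemma QuotientGroup.map_iterate_mk (k : ℕ) (g : π) :
    (⇑(QuotientGroup.map N N φ hφ))^[k] (g : π ⧸ N) = ((⇑φ)^[k] g : π ⧸ N) :=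
  (Function.Semiconj.iterate_right (f := ((↑) : π → π ⧸ N)) (fun _ => rfl) k g).symm

lemma Lk_image_mk_le [DecidableEq (π ⧸ N)] {S : Finset π}
    (hS : Subgroup.closure (S : Set π) = ⊤) (k : ℕ) :
    Lk (S.image (↑)) (QuotientGroup.map N N φ hφ) k ≤ Lk S φ k :=
  Finset.sup_le fun t ht => by
    obtain ⟨s, hs, rfl⟩ := Finset.mem_image.mp ht
    rw [QuotientGroup.map_iterate_mk, Finset.coe_image, ← QuotientGroup.coe_mk']
    exact (wordLength_image_map_le hS _ _).trans (wordLength_iterate_le_Lk φ hs k)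

lemma Lk_le_Lk_image_mk_add_one [DecidableEq (π ⧸ N)] {S : Finset π}
    (hS : Subgroup.closure (S : Set π) = ⊤) (hNS : (N : Set π) ⊆ S) (k : ℕ) :
    Lk S φ k ≤ Lk (S.image (↑)) (QuotientGroup.map N N φ hφ) k + 1 :=
  Finset.sup_le fun s hs => by
    refine (wordLength_le_wordLength_mk_add_one hS hNS _).trans (Nat.add_le_add_right ?_ 1)
    rw [← QuotientGroup.map_iterate_mk φ hφ, ← Finset.coe_image]
    exact wordLength_iterate_le_Lk _ (Finset.mem_image_of_mem _ hs) k

lemma GR_map_le {S : Finset π} (hS : Subgroup.closure (S : Set π) = ⊤) {T : Finset (π ⧸ N)}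
    (hT : Subgroup.closure (T : Set (π ⧸ N)) = ⊤) :
    GR T (QuotientGroup.map N N φ hφ) ≤ GR S φ := by
  classical
  have hST : Subgroup.closure ((S.image (↑) : Finset (π ⧸ N)) : Set (π ⧸ N)) = ⊤ := by
    rw [Finset.coe_image]; exact QuotientGroup.closure_image_mk_eq_top hS
  rw [GR_eq_of_closure_eq_top hT hST]
  exact GR_le_GR_of_Lk_le_mul hS φ 1 fun k _ => by simpa using Lk_image_mk_le φ hφ hS k

lemma GR_le_GR_map_of_not_eventuallyTrivial (hN : (N : Set π).Finite) {S : Finset π}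
    (hS : Subgroup.closure (S : Set π) = ⊤) {T : Finset (π ⧸ N)}
    (hT : Subgroup.closure (T : Set (π ⧸ N)) = ⊤)
    (hφN : ¬ EventuallyTrivial (QuotientGroup.map N N φ hφ)) :
    GR S φ ≤ GR T (QuotientGroup.map N N φ hφ) := by
  classical
  obtain ⟨V, hV, hNV⟩ := exists_finset_closure_eq_top_superset hS hN
  have hVT : Subgroup.closure ((V.image (↑) : Finset (π ⧸ N)) : Set (π ⧸ N)) = ⊤ := by
    rw [Finset.coe_image]; exact QuotientGroup.closure_image_mk_eq_top hV
  rw [GR_eq_of_closure_eq_top hS hV, GR_eq_of_closure_eq_top hT hVT]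
  refine GR_le_GR_of_Lk_le_mul hVT _ 2 fun k hk => ?_
  have := one_le_Lk_of_not_eventuallyTrivial hVT _ hφN hk
  have := Lk_le_Lk_image_mk_add_one φ hφ hV hNV k
  omega

lemma GR_le_one_of_eventuallyTrivial_map (hN : (N : Set π).Finite) {S : Finset π}
    (hS : Subgroup.closure (S : Set π) = ⊤)
    (hφN : EventuallyTrivial (QuotientGroup.map N N φ hφ)) : GR S φ ≤ 1 := by
  classical
  obtain ⟨V, hV, hNV⟩ := exists_finset_closure_eq_top_superset hS hN
  obtain ⟨k, hk, hφk⟩ := hφN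
  rw [GR_eq_of_closure_eq_top hS hV]
  refine GR_le_one_of_Lk_le_one hk ?_
  simpa [Lk_eq_zero_of_iterate_eq_one hφk] using Lk_le_Lk_image_mk_add_one φ hφ hV hNV k

lemma eventuallyTrivial_of_restrict_of_map {φ' : N →* N} (hφ' : ∀ x, (φ' x : π) = φ x)
    (h' : EventuallyTrivial φ') (hφN : EventuallyTrivial (QuotientGroup.map N N φ hφ)) :
    EventuallyTrivial φ := by
  obtain ⟨m, hm, hφ'm⟩ := h'
  obtain ⟨n, hn, hφn⟩ := hφN
  refine ⟨m + n, by omega, fun g => ?_⟩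
  have hgN : (⇑φ)^[n] g ∈ N := by
    rw [← QuotientGroup.eq_one_iff, ← QuotientGroup.map_iterate_mk φ hφ, hφn]
  rw [Function.iterate_add_apply,
    ← Function.Semiconj.iterate_right (f := ((↑) : N → π)) hφ' m ⟨_, hgN⟩, hφ'm, Subgroup.coe_one]

end Extension

/-- If `π'` is a `φ`-invariant finite normal subgroup of the finitely
generated group `π`, then `GR(φ) = max{GR(φ'), GR(φ̂)}`, and `GR(φ) = GR(φ̂)` if and only
if `φ'` is eventually trivial or `φ̂` is not eventually trivial. -/
theorem GR_eq_max_of_finite_normal {π : Type*} [Group π] (S : Finset π)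
    (hS : Subgroup.closure (S : Set π) = ⊤) (φ : π →* π)
    (N : Subgroup π) [N.Normal] (hfin : (N : Set π).Finite) (hinv : ∀ g ∈ N, φ g ∈ N)
    (S' : Finset N) (hS' : Subgroup.closure (S' : Set N) = ⊤)
    (T : Finset (π ⧸ N)) (hT : Subgroup.closure (T : Set (π ⧸ N)) = ⊤) :
    GR S ⇑φ = max (GR S' (fun x : N => (⟨φ x, hinv x x.2⟩ : N)))
        (GR T ⇑(QuotientGroup.map N N φ (fun g hg => hinv g hg))) ∧
    (GR S ⇑φ = GR T ⇑(QuotientGroup.map N N φ (fun g hg => hinv g hg)) ↔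
      EventuallyTrivial (fun x : N => (⟨φ x, hinv x x.2⟩ : N)) ∨
      ¬ EventuallyTrivial ⇑(QuotientGroup.map N N φ (fun g hg => hinv g hg))) := by
  set φ' : N →* N := (φ.domRestrict N).codRestrict N fun x => hinv x x.2
  have hφ' : ∀ x, (φ' x : π) = φ x := fun _ => rfl
  change GR S φ = max (GR S' φ') _ ∧ (_ ↔ EventuallyTrivial φ' ∨ _)
  set φN := QuotientGroup.map N N φ (fun g hg => hinv g hg)
  have hNfin : Finite N := hfin.to_subtype
  have hres : GR S' φ' ≤ 1 := GR_le_one_of_finite S' φ'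
  by_cases hφN : EventuallyTrivial φN
  · have hquot : GR T φN = 0 := GR_eq_zero_of_eventuallyTrivial T hφN
    by_cases h' : EventuallyTrivial φ'
    · have hφ : GR S φ = 0 :=
        GR_eq_zero_of_eventuallyTrivial S (eventuallyTrivial_of_restrict_of_map φ _ hφ' h' hφN)
      simp [hφ, hquot, GR_eq_zero_of_eventuallyTrivial S' h', h']
    · have hφ : GR S φ = 1 :=
        le_antisymm (GR_le_one_of_eventuallyTrivial_map φ _ hfin hS hφN)
          (one_le_GR_of_not_eventuallyTrivial hS φ fun h => h' (eventuallyTrivial_restrict φ hφ' h))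
      have hres1 : GR S' φ' = 1 :=
        le_antisymm hres (one_le_GR_of_not_eventuallyTrivial hS' φ' h')
      simp [hφ, hres1, hquot, h', hφN]
  · have hφ : GR S φ = GR T φN :=
      le_antisymm (GR_le_GR_map_of_not_eventuallyTrivial φ _ hfin hS hT hφN)
        (GR_map_le φ _ hS hT)
    refine ⟨?_, fun _ => Or.inr hφN, fun _ => hφ⟩
    rw [hφ, max_eq_right (hres.trans (one_le_GR_of_not_eventuallyTrivial hT φN hφN))]
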